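/- arXiv:2409.19876 — 5 statements merged into one kernel-verified Lean document; each statement's English description precedes it below -/
import Mathlib

section
/- Let F and G be cumulative distribution functions on ℝ. Then τ(F, G) := sup over couplings (X, Y) of (F, G) of P{X ≤ Y} equals 1 − sup_x (G(x) − F(x)). -/
open MeasureTheory ProbabilityTheory Set Filter Topology

namespace TauAux

/-! ### Generalized inverse (quantile) of a sub-CDF -/

noncomputable def qf (H : ℝ → ℝ) (t : ℝ) : ℝ := sInf {x | t ≤ H x}

variable {H K : ℝ → ℝ} {m t x : ℝ}

lemma qf_nonempty (htop : Tendsto H atTop (𝓝 m)) (ht : t < m) :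
    {x | t ≤ H x}.Nonempty := by
  obtain ⟨y, hy⟩ := (htop.eventually (eventually_gt_nhds ht)).exists
  exact ⟨y, hy.le⟩

lemma qf_bddBelow (hmono : Monotone H) (hbot : Tendsto H atBot (𝓝 0)) (ht : 0 < t) :
    BddBelow {x | t ≤ H x} := by
  obtain ⟨y, hy⟩ := (hbot.eventually (eventually_lt_nhds ht)).exists
  refine ⟨y, fun z hz => ?_⟩
  by_contra hzy
  exact absurd (hz.trans (hmono (not_le.mp hzy).le)) (not_le.mpr hy)

lemma le_qf_apply (hmono : Monotone H)
    (hrc : ∀ x, ContinuousWithinAt H (Ici x) x)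
    (hne : {x | t ≤ H x}.Nonempty) (hbdd : BddBelow {x | t ≤ H x}) :
    t ≤ H (qf H t) := by
  have h1 : ∀ᶠ y in 𝓝[>] (qf H t), t ≤ H y := by
    filter_upwards [self_mem_nhdsWithin] with y hy
    obtain ⟨z, hz, hzy⟩ := exists_lt_of_csInf_lt hne (hy : qf H t < y)
    exact hz.trans (hmono hzy.le)
  have h2 : Tendsto H (𝓝[>] (qf H t)) (𝓝 (H (qf H t))) :=
    ((hrc (qf H t)).mono Ioi_subset_Ici_self : Tendsto _ _ _)
  exact ge_of_tendsto h2 h1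

lemma qf_le_iff (hmono : Monotone H)
    (hrc : ∀ x, ContinuousWithinAt H (Ici x) x)
    (hne : {x | t ≤ H x}.Nonempty) (hbdd : BddBelow {x | t ≤ H x}) :
    qf H t ≤ x ↔ t ≤ H x := by
  constructor
  · intro h
    exact (le_qf_apply hmono hrc hne hbdd).trans (hmono h)
  · intro h
    exact csInf_le hbdd h

lemma qf_le_qf (hmono : Monotone H) (hbot : Tendsto H atBot (𝓝 0))
    (htopK : Tendsto K atTop (𝓝 m)) (hKH : ∀ y, K y ≤ H y)
    (ht0 : 0 < t) (htm : t < m) : qf H t ≤ qf K t := by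
  refine csInf_le_csInf (qf_bddBelow hmono hbot ht0) (qf_nonempty htopK htm) ?_
  intro z hz
  exact (hz : t ≤ K z).trans (hKH z)

lemma monotoneOn_qf (hmono : Monotone H) (hbot : Tendsto H atBot (𝓝 0))
    (htop : Tendsto H atTop (𝓝 m)) : MonotoneOn (qf H) (Ioo 0 m) := by
  intro t1 ht1 t2 ht2 h12
  refine csInf_le_csInf (qf_bddBelow hmono hbot ht1.1) (qf_nonempty htop ht2.2) ?_
  intro z hz
  exact h12.trans hz

lemma mono_le_of_tendsto_atTop (hmono : Monotone H) (htop : Tendsto H atTop (𝓝 m)) :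
    H x ≤ m :=
  ge_of_tendsto htop (eventually_atTop.mpr ⟨x, fun y hy => hmono hy⟩)

lemma mono_nonneg_of_tendsto_atBot (hmono : Monotone H) (hbot : Tendsto H atBot (𝓝 0)) :
    0 ≤ H x :=
  le_of_tendsto hbot (eventually_atBot.mpr ⟨x, fun y hy => hmono hy⟩)

/-- Key computation: the preimage of `Iic x` under the quantile, within `(0, m)`. -/
lemma volume_qf_preimage (hmono : Monotone H)
    (hrc : ∀ x, ContinuousWithinAt H (Ici x) x)
    (hbot : Tendsto H atBot (𝓝 0)) (htop : Tendsto H atTop (𝓝 m)) (x : ℝ) :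
    volume (qf H ⁻¹' (Iic x) ∩ Ioo 0 m) = ENNReal.ofReal (H x) := by
  have hHx0 : 0 ≤ H x := mono_nonneg_of_tendsto_atBot hmono hbot
  have hHxm : H x ≤ m := mono_le_of_tendsto_atTop hmono htop
  have hset : qf H ⁻¹' (Iic x) ∩ Ioo 0 m = Iic (H x) ∩ Ioo 0 m := by
    ext t
    simp only [mem_inter_iff, mem_preimage, mem_Iic, mem_Ioo, and_congr_left_iff]
    intro ht
    exact qf_le_iff hmono hrc (qf_nonempty htop ht.2) (qf_bddBelow hmono hbot ht.1)
  rw [hset]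
  rcases eq_or_lt_of_le hHxm with h | h
  · have : Iic (H x) ∩ Ioo 0 m = Ioo 0 m := by
      refine inter_eq_right.mpr ?_
      intro t ht; exact (ht.2.le.trans h.ge : t ≤ H x)
    rw [this, Real.volume_Ioo, sub_zero, h]
  · have : Iic (H x) ∩ Ioo 0 m = Ioc 0 (H x) := by
      ext t
      simp only [mem_inter_iff, mem_Iic, mem_Ioo, mem_Ioc]
      constructor
      · rintro ⟨h1, h2, _⟩; exact ⟨h2, h1⟩
      · rintro ⟨h1, h2⟩; exact ⟨h2, h1, lt_of_le_of_lt h2 h⟩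
    rw [this, Real.volume_Ioc, sub_zero]





/-- Hypotheses bundle: a CDF-like function. -/
structure Hyp (F : ℝ → ℝ) : Prop where
  mono : Monotone F
  rc : ∀ x, ContinuousWithinAt F (Ici x) x
  bot : Tendsto F atBot (𝓝 0)
  top : Tendsto F atTop (𝓝 1)

variable {F G : ℝ → ℝ}

lemma Hyp.nonneg (hF : Hyp F) (x : ℝ) : 0 ≤ F x :=
  le_of_tendsto hF.bot (eventually_atBot.mpr ⟨x, fun _ hy => hF.mono hy⟩)

lemma Hyp.le_one (hF : Hyp F) (x : ℝ) : F x ≤ 1 :=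
  ge_of_tendsto hF.top (eventually_atTop.mpr ⟨x, fun _ hy => hF.mono hy⟩)

/-- positive part of `G - F` -/
noncomputable def dp (F G : ℝ → ℝ) (x : ℝ) : ℝ := max (G x - F x) 0

noncomputable def uu (F G : ℝ → ℝ) (x : ℝ) : ℝ := sSup (dp F G '' Ici x)

noncomputable def vv (F G : ℝ → ℝ) (x : ℝ) : ℝ := sSup (dp F G '' Iic x)

noncomputable def sp (F G : ℝ → ℝ) : ℝ := sSup (range (dp F G))

lemma dp_nonneg (x : ℝ) : 0 ≤ dp F G x := le_max_right _ _

lemma dp_le_one (hF : Hyp F) (hG : Hyp G) (x : ℝ) : dp F G x ≤ 1 :=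
  max_le (by have := hG.le_one x; have := hF.nonneg x; linarith) zero_le_one

lemma dp_le_G (hF : Hyp F) (x : ℝ) (hGx : 0 ≤ G x) : dp F G x ≤ G x :=
  max_le (by have := hF.nonneg x; linarith) hGx

lemma bddAbove_dp_image (hF : Hyp F) (hG : Hyp G) (s : Set ℝ) : BddAbove (dp F G '' s) := by
  refine ⟨1, fun z hz => ?_⟩
  obtain ⟨y, _, rfl⟩ := hz
  exact dp_le_one hF hG y

lemma bddAbove_dp_range (hF : Hyp F) (hG : Hyp G) : BddAbove (range (dp F G)) := by
  refine ⟨1, fun z hz => ?_⟩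
  obtain ⟨y, rfl⟩ := hz
  exact dp_le_one hF hG y

lemma dp_le_uu (hF : Hyp F) (hG : Hyp G) {x y : ℝ} (h : x ≤ y) : dp F G y ≤ uu F G x :=
  le_csSup (bddAbove_dp_image hF hG _) (mem_image_of_mem _ (by simpa using h))

lemma dp_le_vv (hF : Hyp F) (hG : Hyp G) {x y : ℝ} (h : y ≤ x) : dp F G y ≤ vv F G x :=
  le_csSup (bddAbove_dp_image hF hG _) (mem_image_of_mem _ (by simpa using h))

lemma uu_le {x c : ℝ} (h : ∀ y, x ≤ y → dp F G y ≤ c) : uu F G x ≤ c := by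
  refine csSup_le (by exact ⟨dp F G x, mem_image_of_mem _ (by simp)⟩) ?_
  rintro z ⟨y, hy, rfl⟩; exact h y hy

lemma vv_le {x c : ℝ} (h : ∀ y, y ≤ x → dp F G y ≤ c) : vv F G x ≤ c := by
  refine csSup_le (by exact ⟨dp F G x, mem_image_of_mem _ (by simp)⟩) ?_
  rintro z ⟨y, hy, rfl⟩; exact h y hy

lemma sp_le {c : ℝ} (h : ∀ y, dp F G y ≤ c) : sp F G ≤ c :=
  csSup_le (range_nonempty _) (by rintro z ⟨y, rfl⟩; exact h y)

lemma dp_le_sp (hF : Hyp F) (hG : Hyp G) (x : ℝ) : dp F G x ≤ sp F G :=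
  le_csSup (bddAbove_dp_range hF hG) (mem_range_self x)

lemma uu_nonneg (hF : Hyp F) (hG : Hyp G) (x : ℝ) : 0 ≤ uu F G x :=
  (dp_nonneg x).trans (dp_le_uu hF hG le_rfl)

lemma vv_nonneg (hF : Hyp F) (hG : Hyp G) (x : ℝ) : 0 ≤ vv F G x :=
  (dp_nonneg x).trans (dp_le_vv hF hG le_rfl)

lemma sp_nonneg (hF : Hyp F) (hG : Hyp G) : 0 ≤ sp F G :=
  (dp_nonneg 0).trans (dp_le_sp hF hG 0)

lemma sp_le_one (hF : Hyp F) (hG : Hyp G) : sp F G ≤ 1 := sp_le (dp_le_one hF hG)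

lemma uu_le_sp (hF : Hyp F) (hG : Hyp G) (x : ℝ) : uu F G x ≤ sp F G :=
  uu_le (fun y _ => dp_le_sp hF hG y)

lemma vv_le_sp (hF : Hyp F) (hG : Hyp G) (x : ℝ) : vv F G x ≤ sp F G :=
  vv_le (fun y _ => dp_le_sp hF hG y)

lemma uu_antitone (hF : Hyp F) (hG : Hyp G) : Antitone (uu F G) := by
  intro x y hxy
  exact uu_le (fun z hz => dp_le_uu hF hG (hxy.trans hz))

lemma vv_monotone (hF : Hyp F) (hG : Hyp G) : Monotone (vv F G) := by
  intro x y hxy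
  exact vv_le (fun z hz => dp_le_vv hF hG (hz.trans hxy))

lemma sp_le_max (hF : Hyp F) (hG : Hyp G) (x : ℝ) :
    sp F G ≤ max (uu F G x) (vv F G x) := by
  refine sp_le (fun y => ?_)
  rcases le_total y x with h | h
  · exact (dp_le_vv hF hG h).trans (le_max_right _ _)
  · exact (dp_le_uu hF hG h).trans (le_max_left _ _)

lemma key_ineq (hF : Hyp F) (hG : Hyp G) (x : ℝ) :
    sp F G + (G x - F x) ≤ uu F G x + vv F G x := by
  have h1 : sp F G ≤ max (uu F G x) (vv F G x) := sp_le_max hF hG x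
  have h2 : G x - F x ≤ min (uu F G x) (vv F G x) :=
    le_min ((le_max_left _ _).trans (dp_le_uu hF hG le_rfl))
      ((le_max_left _ _).trans (dp_le_vv hF hG le_rfl))
  calc sp F G + (G x - F x) ≤ max (uu F G x) (vv F G x) + min (uu F G x) (vv F G x) :=
        add_le_add h1 h2
    _ = uu F G x + vv F G x := max_add_min _ _

lemma vv_le_G (hF : Hyp F) (hG : Hyp G) (x : ℝ) : vv F G x ≤ G x := by
  refine vv_le (fun y hy => ?_)
  exact (dp_le_G hF y (hG.nonneg y)).trans (hG.mono hy)

lemma vv_le_F_add_uu (hF : Hyp F) (hG : Hyp G) (x : ℝ) :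
    vv F G x ≤ F x + uu F G x := by
  refine vv_le (fun y hy => ?_)
  refine max_le ?_ (by have := hF.nonneg x; have := uu_nonneg hF hG x; linarith)
  have h1 : G y - F y ≤ G y := by have := hF.nonneg y; linarith
  have h2 : G y ≤ G x := hG.mono hy
  have h3 : G x - F x ≤ uu F G x := (le_max_left _ _).trans (dp_le_uu hF hG le_rfl)
  linarith

lemma sp_le_F_add_uu (hF : Hyp F) (hG : Hyp G) (x : ℝ) :
    sp F G ≤ F x + uu F G x := by
  refine (sp_le_max hF hG x).trans (max_le ?_ (vv_le_F_add_uu hF hG x))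
  have := hF.nonneg x; linarith

lemma dp_rc (hF : Hyp F) (hG : Hyp G) (x : ℝ) :
    ContinuousWithinAt (dp F G) (Ici x) x :=
  ((hG.rc x).sub (hF.rc x)).max continuousWithinAt_const

lemma uu_rc (hF : Hyp F) (hG : Hyp G) (x₀ : ℝ) :
    ContinuousWithinAt (uu F G) (Ici x₀) x₀ := by
  rw [Metric.continuousWithinAt_iff]
  intro ε hε
  obtain ⟨δ, hδ, hd⟩ := Metric.continuousWithinAt_iff.mp (dp_rc hF hG x₀) (ε/4) (by linarith)
  refine ⟨δ, hδ, fun x hx hxd => ?_⟩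
  have hx0 : x₀ ≤ x := hx
  have h1 : uu F G x ≤ uu F G x₀ := uu_antitone hF hG hx0
  have h2 : uu F G x₀ ≤ uu F G x + ε/2 := by
    refine uu_le (fun y hy => ?_)
    rcases le_or_gt x y with h | h
    · exact (dp_le_uu hF hG h).trans (by linarith [show (0:ℝ) ≤ ε/2 by linarith])
    · have hyIci : y ∈ Ici x₀ := hy
      have hyd : dist y x₀ < δ := by
        rw [Real.dist_eq, abs_of_nonneg (by simpa using hy)]
        rw [Real.dist_eq, abs_of_nonneg (by simpa using hx0)] at hxd
        linarith
      have e1 : |dp F G y - dp F G x₀| < ε/4 := by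
        have := hd hyIci hyd; rwa [Real.dist_eq] at this
      have e2 : |dp F G x - dp F G x₀| < ε/4 := by
        have := hd hx hxd; rwa [Real.dist_eq] at this
      have e3 : dp F G x ≤ uu F G x := dp_le_uu hF hG le_rfl
      have a1 := abs_le.mp e1.le
      have a2 := abs_le.mp e2.le
      linarith [a1.2, a2.1]
  rw [Real.dist_eq, abs_lt]
  constructor <;> linarith

lemma vv_rc (hF : Hyp F) (hG : Hyp G) (x₀ : ℝ) :
    ContinuousWithinAt (vv F G) (Ici x₀) x₀ := by
  rw [Metric.continuousWithinAt_iff]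
  intro ε hε
  obtain ⟨δ, hδ, hd⟩ := Metric.continuousWithinAt_iff.mp (dp_rc hF hG x₀) (ε/4) (by linarith)
  refine ⟨δ, hδ, fun x hx hxd => ?_⟩
  have hx0 : x₀ ≤ x := hx
  have h1 : vv F G x₀ ≤ vv F G x := vv_monotone hF hG hx0
  have h2 : vv F G x ≤ vv F G x₀ + ε/2 := by
    refine vv_le (fun y hy => ?_)
    rcases le_or_gt y x₀ with h | h
    · exact (dp_le_vv hF hG h).trans (by linarith [show (0:ℝ) ≤ ε/2 by linarith])
    · have hyIci : y ∈ Ici x₀ := h.le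
      have hyd : dist y x₀ < δ := by
        rw [Real.dist_eq, abs_of_nonneg (by simpa using h.le)]
        rw [Real.dist_eq, abs_of_nonneg (by simpa using hx0)] at hxd
        linarith
      have e1 : |dp F G y - dp F G x₀| < ε/4 := by
        have := hd hyIci hyd; rwa [Real.dist_eq] at this
      have e2 : dp F G x₀ ≤ vv F G x₀ := dp_le_vv hF hG le_rfl
      have a1 := abs_le.mp e1.le
      linarith [a1.2]
  rw [Real.dist_eq, abs_lt]
  constructor <;> linarith

lemma uu_tendsto_atTop (hF : Hyp F) (hG : Hyp G) :
    Tendsto (uu F G) atTop (𝓝 0) := by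
  rw [Metric.tendsto_nhds]
  intro ε hε
  rw [eventually_atTop]
  obtain ⟨N, hN⟩ := eventually_atTop.mp
    (hF.top.eventually (eventually_gt_nhds (show 1 - ε/2 < 1 by linarith)))
  refine ⟨N, fun x hx => ?_⟩
  have h1 : uu F G x ≤ ε/2 := by
    refine uu_le (fun y hy => max_le ?_ (by linarith))
    have := hN y (hx.trans hy)
    have := hG.le_one y
    linarith
  have h2 : 0 ≤ uu F G x := uu_nonneg hF hG x
  rw [Real.dist_eq, sub_zero, abs_of_nonneg h2]
  linarith

lemma uu_tendsto_atBot (hF : Hyp F) (hG : Hyp G) :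
    Tendsto (uu F G) atBot (𝓝 (sp F G)) := by
  rw [Metric.tendsto_nhds]
  intro ε hε
  rw [eventually_atBot]
  obtain ⟨w, hw, hw2⟩ := exists_lt_of_lt_csSup (range_nonempty (dp F G))
    (show sp F G - ε/2 < sp F G by linarith)
  obtain ⟨y, rfl⟩ := hw
  refine ⟨y, fun x hx => ?_⟩
  have h1 : sp F G - ε/2 < uu F G x := hw2.trans_le (dp_le_uu hF hG hx)
  have h2 : uu F G x ≤ sp F G := uu_le_sp hF hG x
  rw [Real.dist_eq, abs_lt]
  constructor <;> linarith

lemma vv_tendsto_atBot (hF : Hyp F) (hG : Hyp G) :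
    Tendsto (vv F G) atBot (𝓝 0) := by
  rw [Metric.tendsto_nhds]
  intro ε hε
  rw [eventually_atBot]
  obtain ⟨N, hN⟩ := eventually_atBot.mp
    (hG.bot.eventually (eventually_lt_nhds (show (0:ℝ) < ε/2 by linarith)))
  refine ⟨N, fun x hx => ?_⟩
  have h1 : vv F G x ≤ ε/2 := by
    refine vv_le (fun y hy => ?_)
    exact (dp_le_G hF y (hG.nonneg y)).trans (hN y (hy.trans hx)).le
  have h2 : 0 ≤ vv F G x := vv_nonneg hF hG x
  rw [Real.dist_eq, sub_zero, abs_of_nonneg h2]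
  linarith

lemma vv_tendsto_atTop (hF : Hyp F) (hG : Hyp G) :
    Tendsto (vv F G) atTop (𝓝 (sp F G)) := by
  rw [Metric.tendsto_nhds]
  intro ε hε
  rw [eventually_atTop]
  obtain ⟨w, hw, hw2⟩ := exists_lt_of_lt_csSup (range_nonempty (dp F G))
    (show sp F G - ε/2 < sp F G by linarith)
  obtain ⟨y, rfl⟩ := hw
  refine ⟨y, fun x hx => ?_⟩
  have h1 : sp F G - ε/2 < vv F G x := hw2.trans_le (dp_le_vv hF hG hx)
  have h2 : vv F G x ≤ sp F G := vv_le_sp hF hG x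
  rw [Real.dist_eq, abs_lt]
  constructor <;> linarith


/-! ### The decomposition -/

noncomputable def F1 (F G : ℝ → ℝ) (x : ℝ) : ℝ := F x - (sp F G - uu F G x)
noncomputable def F2 (F G : ℝ → ℝ) (x : ℝ) : ℝ := sp F G - uu F G x
noncomputable def G1 (F G : ℝ → ℝ) (x : ℝ) : ℝ := G x - vv F G x
noncomputable def G2 (F G : ℝ → ℝ) (x : ℝ) : ℝ := vv F G x

lemma F1_mono (hF : Hyp F) (hG : Hyp G) : Monotone (F1 F G) := by
  intro x z hxz
  have key : uu F G x ≤ F z - F x + uu F G z := by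
    refine uu_le (fun y hy => ?_)
    rcases le_or_gt z y with h | h
    · have h1 : dp F G y ≤ uu F G z := dp_le_uu hF hG h
      have h2 : F x ≤ F z := hF.mono hxz
      linarith
    · refine max_le ?_ ?_
      · have h1 : G z - F z ≤ uu F G z := (le_max_left _ _).trans (dp_le_uu hF hG le_rfl)
        have h2 : G y ≤ G z := hG.mono h.le
        have h3 : F x ≤ F y := hF.mono hy
        linarith
      · have h2 : F x ≤ F z := hF.mono hxz
        have := uu_nonneg hF hG z
        linarith
  simp only [F1]; linarith

lemma G1_mono (hF : Hyp F) (hG : Hyp G) : Monotone (G1 F G) := by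
  intro x z hxz
  have key : vv F G z ≤ G z - G x + vv F G x := by
    refine vv_le (fun y hy => ?_)
    rcases le_or_gt y x with h | h
    · have h1 : dp F G y ≤ vv F G x := dp_le_vv hF hG h
      have h2 : G x ≤ G z := hG.mono hxz
      linarith
    · refine max_le ?_ ?_
      · have h1 : G x - F x ≤ vv F G x := (le_max_left _ _).trans (dp_le_vv hF hG le_rfl)
        have h2 : G y ≤ G z := hG.mono hy
        have h3 : F x ≤ F y := hF.mono h.le
        linarith
      · have h2 : G x ≤ G z := hG.mono hxz
        have := vv_nonneg hF hG x
        linarith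
  simp only [G1]; linarith

lemma F2_mono (hF : Hyp F) (hG : Hyp G) : Monotone (F2 F G) := by
  intro x z hxz
  have := uu_antitone hF hG hxz
  simp only [F2]; linarith

lemma G2_mono (hF : Hyp F) (hG : Hyp G) : Monotone (G2 F G) :=
  fun x z hxz => vv_monotone hF hG hxz

lemma F1_rc (hF : Hyp F) (hG : Hyp G) (x : ℝ) :
    ContinuousWithinAt (F1 F G) (Ici x) x :=
  (hF.rc x).sub (continuousWithinAt_const.sub (uu_rc hF hG x))

lemma F2_rc (hF : Hyp F) (hG : Hyp G) (x : ℝ) :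
    ContinuousWithinAt (F2 F G) (Ici x) x :=
  continuousWithinAt_const.sub (uu_rc hF hG x)

lemma G1_rc (hF : Hyp F) (hG : Hyp G) (x : ℝ) :
    ContinuousWithinAt (G1 F G) (Ici x) x :=
  (hG.rc x).sub (vv_rc hF hG x)

lemma G2_rc (hF : Hyp F) (hG : Hyp G) (x : ℝ) :
    ContinuousWithinAt (G2 F G) (Ici x) x := vv_rc hF hG x

lemma F1_bot (hF : Hyp F) (hG : Hyp G) : Tendsto (F1 F G) atBot (𝓝 0) := by
  have := hF.bot.sub ((tendsto_const_nhds (x := sp F G)).sub (uu_tendsto_atBot hF hG))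
  show Tendsto (fun x => F x - (sp F G - uu F G x)) atBot (𝓝 0)
  simpa using this

lemma F1_top (hF : Hyp F) (hG : Hyp G) : Tendsto (F1 F G) atTop (𝓝 (1 - sp F G)) := by
  have := hF.top.sub ((tendsto_const_nhds (x := sp F G)).sub (uu_tendsto_atTop hF hG))
  show Tendsto (fun x => F x - (sp F G - uu F G x)) atTop (𝓝 (1 - sp F G))
  simpa using this

lemma F2_bot (hF : Hyp F) (hG : Hyp G) : Tendsto (F2 F G) atBot (𝓝 0) := by
  have := (tendsto_const_nhds (x := sp F G)).sub (uu_tendsto_atBot hF hG)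
  show Tendsto (fun x => sp F G - uu F G x) atBot (𝓝 0)
  simpa using this

lemma F2_top (hF : Hyp F) (hG : Hyp G) : Tendsto (F2 F G) atTop (𝓝 (sp F G)) := by
  have := (tendsto_const_nhds (x := sp F G)).sub (uu_tendsto_atTop hF hG)
  show Tendsto (fun x => sp F G - uu F G x) atTop (𝓝 (sp F G))
  simpa using this

lemma G1_bot (hF : Hyp F) (hG : Hyp G) : Tendsto (G1 F G) atBot (𝓝 0) := by
  have := hG.bot.sub (vv_tendsto_atBot hF hG)
  show Tendsto (fun x => G x - vv F G x) atBot (𝓝 0)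
  simpa using this

lemma G1_top (hF : Hyp F) (hG : Hyp G) : Tendsto (G1 F G) atTop (𝓝 (1 - sp F G)) := by
  exact hG.top.sub (vv_tendsto_atTop hF hG)

lemma G2_bot (hF : Hyp F) (hG : Hyp G) : Tendsto (G2 F G) atBot (𝓝 0) :=
  vv_tendsto_atBot hF hG

lemma G2_top (hF : Hyp F) (hG : Hyp G) : Tendsto (G2 F G) atTop (𝓝 (sp F G)) :=
  vv_tendsto_atTop hF hG

lemma G1_le_F1 (hF : Hyp F) (hG : Hyp G) (x : ℝ) : G1 F G x ≤ F1 F G x := by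
  have := key_ineq hF hG x
  simp only [G1, F1]; linarith

lemma F1_nonneg (hF : Hyp F) (hG : Hyp G) (x : ℝ) : 0 ≤ F1 F G x := by
  have := sp_le_F_add_uu hF hG x
  simp only [F1]; linarith

lemma F2_nonneg (hF : Hyp F) (hG : Hyp G) (x : ℝ) : 0 ≤ F2 F G x := by
  have := uu_le_sp hF hG x
  simp only [F2]; linarith

lemma G1_nonneg (hF : Hyp F) (hG : Hyp G) (x : ℝ) : 0 ≤ G1 F G x := by
  have := vv_le_G hF hG x
  simp only [G1]; linarith

lemma G2_nonneg (hF : Hyp F) (hG : Hyp G) (x : ℝ) : 0 ≤ G2 F G x :=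
  vv_nonneg hF hG x

end TauAux

open TauAux in
/-- For CDFs `F`, `G` of probability measures `μ`, `ν` on `ℝ`,
`τ(F, G) := sup` over couplings `(X, Y)` of `P{X ≤ Y}` equals `1 − sup_x (G(x) − F(x))`. -/
theorem tau_eq_one_sub_sup_cdf_diff (μ ν : Measure ℝ)
    [IsProbabilityMeasure μ] [IsProbabilityMeasure ν] :
    sSup {r : ℝ | ∃ π : Measure (ℝ × ℝ), π.map Prod.fst = μ ∧ π.map Prod.snd = ν ∧
        (π {p : ℝ × ℝ | p.1 ≤ p.2}).toReal = r}
      = 1 - ⨆ x : ℝ, (cdf ν x - cdf μ x) := by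
  set F : ℝ → ℝ := ⇑(cdf μ) with hFdef
  set G : ℝ → ℝ := ⇑(cdf ν) with hGdef
  have hF : Hyp F := ⟨monotone_cdf μ, fun x => (cdf μ).right_continuous x,
    tendsto_cdf_atBot μ, tendsto_cdf_atTop μ⟩
  have hG : Hyp G := ⟨monotone_cdf ν, fun x => (cdf ν).right_continuous x,
    tendsto_cdf_atBot ν, tendsto_cdf_atTop ν⟩
  set s := sp F G with hsdef
  have hs0 : 0 ≤ s := sp_nonneg hF hG
  have hs1 : s ≤ 1 := sp_le_one hF hG
  -- the sup in the statement equals s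
  have hsup : (⨆ x : ℝ, (G x - F x)) = s := by
    have hbdd : BddAbove (range fun x => G x - F x) := by
      refine ⟨1, ?_⟩; rintro z ⟨y, rfl⟩
      have := hG.le_one y; have := hF.nonneg y
      simp only []; linarith
    have hle : (⨆ x : ℝ, (G x - F x)) ≤ s :=
      ciSup_le (fun x => (le_max_left _ _).trans (dp_le_sp hF hG x))
    have h0 : 0 ≤ ⨆ x : ℝ, (G x - F x) := by
      have hlim : Tendsto (fun x => G x - F x) atBot (𝓝 0) := by
        simpa using hG.bot.sub hF.bot
      exact le_of_tendsto hlim (Eventually.of_forall (fun x => le_ciSup hbdd x))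
    have hge : s ≤ ⨆ x : ℝ, (G x - F x) :=
      sp_le (fun y => max_le (le_ciSup hbdd y) h0)
    exact le_antisymm hle hge
  rw [hsup]
  set S : Set (ℝ × ℝ) := {p : ℝ × ℝ | p.1 ≤ p.2} with hSdef
  have hS : MeasurableSet S := measurableSet_le measurable_fst measurable_snd
  set R : Set ℝ := {r : ℝ | ∃ π : Measure (ℝ × ℝ), π.map Prod.fst = μ ∧ π.map Prod.snd = ν ∧
      (π S).toReal = r} with hRdef
  -- Part 1: upper bound for every coupling
  have hub : ∀ r ∈ R, r ≤ 1 - s := by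
    rintro r ⟨π', h1, h2, rfl⟩
    have hπuniv : π' univ = 1 := by
      have h := congrArg (fun m : Measure ℝ => m univ) h1
      simpa [Measure.map_apply measurable_fst MeasurableSet.univ] using h
    have hπS_le : π' S ≤ 1 := by rw [← hπuniv]; exact measure_mono (subset_univ S)
    have hπS_ne : π' S ≠ ⊤ := (hπS_le.trans_lt ENNReal.one_lt_top).ne
    have key : ∀ x : ℝ, (π' S).toReal + G x ≤ 1 + F x := by
      intro x
      have hT : ν (Iic x) = π' (Prod.snd ⁻¹' Iic x) := by
        rw [← h2, Measure.map_apply measurable_snd measurableSet_Iic]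
      have hsplit : π' (Prod.snd ⁻¹' Iic x) =
          π' (Prod.snd ⁻¹' Iic x ∩ S) + π' (Prod.snd ⁻¹' Iic x \ S) :=
        (measure_inter_add_diff _ hS).symm
      have hA : π' (Prod.snd ⁻¹' Iic x ∩ S) ≤ μ (Iic x) := by
        rw [← h1, Measure.map_apply measurable_fst measurableSet_Iic]
        refine measure_mono ?_
        rintro ⟨a, b⟩ ⟨hb, hab⟩
        exact le_trans (show a ≤ b from hab) (show b ≤ x from hb)
      have hB : π' (Prod.snd ⁻¹' Iic x \ S) ≤ π' Sᶜ :=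
        measure_mono (fun p hp => hp.2)
      have hcompl : π' S + π' Sᶜ = 1 := by
        rw [measure_add_measure_compl hS, hπuniv]
      have main : π' S + ν (Iic x) ≤ 1 + μ (Iic x) := by
        calc π' S + ν (Iic x)
            = π' S + (π' (Prod.snd ⁻¹' Iic x ∩ S) + π' (Prod.snd ⁻¹' Iic x \ S)) := by
              rw [hT, hsplit]
          _ ≤ π' S + (μ (Iic x) + π' Sᶜ) := add_le_add le_rfl (add_le_add hA hB)
          _ = (π' S + π' Sᶜ) + μ (Iic x) := by ring
          _ = 1 + μ (Iic x) := by rw [hcompl]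
      have hrhs_ne : (1 : ENNReal) + μ (Iic x) ≠ ⊤ := by
        simp [measure_ne_top]
      have h3 := ENNReal.toReal_mono hrhs_ne main
      rw [ENNReal.toReal_add hπS_ne (measure_ne_top _ _),
        ENNReal.toReal_add (by norm_num) (measure_ne_top _ _), ENNReal.toReal_one] at h3
      have e1 : G x = (ν (Iic x)).toReal := cdf_eq_real ν x
      have e2 : F x = (μ (Iic x)).toReal := cdf_eq_real μ x
      rw [e1, e2]
      linarith
    have hr1 : (π' S).toReal ≤ 1 := by
      have := ENNReal.toReal_mono (by norm_num) hπS_le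
      simpa using this
    have hsle : s ≤ 1 - (π' S).toReal := by
      refine sp_le (fun y => max_le ?_ ?_)
      · have := key y; linarith
      · linarith
    linarith
  -- Part 2: construction of an optimal coupling
  set m1 : ℝ := 1 - s with hm1def
  set pair1 : ℝ → ℝ × ℝ := fun t => (qf (F1 F G) t, qf (G1 F G) t) with hpair1
  set pair2 : ℝ → ℝ × ℝ := fun t => (qf (F2 F G) t, qf (G2 F G) t) with hpair2
  have haem1 : AEMeasurable pair1 (volume.restrict (Ioo 0 m1)) :=
    AEMeasurable.prodMk
      (aemeasurable_restrict_of_monotoneOn measurableSet_Ioo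
        (monotoneOn_qf (F1_mono hF hG) (F1_bot hF hG) (F1_top hF hG)))
      (aemeasurable_restrict_of_monotoneOn measurableSet_Ioo
        (monotoneOn_qf (G1_mono hF hG) (G1_bot hF hG) (G1_top hF hG)))
  have haem2 : AEMeasurable pair2 (volume.restrict (Ioo 0 s)) :=
    AEMeasurable.prodMk
      (aemeasurable_restrict_of_monotoneOn measurableSet_Ioo
        (monotoneOn_qf (F2_mono hF hG) (F2_bot hF hG) (F2_top hF hG)))
      (aemeasurable_restrict_of_monotoneOn measurableSet_Ioo
        (monotoneOn_qf (G2_mono hF hG) (G2_bot hF hG) (G2_top hF hG)))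
  set A : Measure (ℝ × ℝ) := (volume.restrict (Ioo 0 m1)).map pair1 with hAdef
  set B : Measure (ℝ × ℝ) := (volume.restrict (Ioo 0 s)).map pair2 with hBdef
  set π : Measure (ℝ × ℝ) := A + B with hπdef
  have hAapply : ∀ T : Set (ℝ × ℝ), MeasurableSet T →
      A T = volume (pair1 ⁻¹' T ∩ Ioo 0 m1) := by
    intro T hT
    rw [hAdef, Measure.map_apply_of_aemeasurable haem1 hT,
      Measure.restrict_apply' measurableSet_Ioo]
  have hBapply : ∀ T : Set (ℝ × ℝ), MeasurableSet T →
      B T = volume (pair2 ⁻¹' T ∩ Ioo 0 s) := by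
    intro T hT
    rw [hBdef, Measure.map_apply_of_aemeasurable haem2 hT,
      Measure.restrict_apply' measurableSet_Ioo]
  -- first marginal
  have hmarg1 : π.map Prod.fst = μ := by
    refine (Measure.ext_of_Iic μ (π.map Prod.fst) (fun x => ?_)).symm
    rw [Measure.map_apply measurable_fst measurableSet_Iic, hπdef, Measure.add_apply,
      hAapply _ (measurable_fst measurableSet_Iic), hBapply _ (measurable_fst measurableSet_Iic)]
    have e1 : pair1 ⁻¹' (Prod.fst ⁻¹' Iic x) = qf (F1 F G) ⁻¹' Iic x := rfl
    have e2 : pair2 ⁻¹' (Prod.fst ⁻¹' Iic x) = qf (F2 F G) ⁻¹' Iic x := rfl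
    rw [e1, e2, volume_qf_preimage (F1_mono hF hG) (F1_rc hF hG) (F1_bot hF hG) (F1_top hF hG),
      volume_qf_preimage (F2_mono hF hG) (F2_rc hF hG) (F2_bot hF hG) (F2_top hF hG),
      ← ENNReal.ofReal_add (F1_nonneg hF hG x) (F2_nonneg hF hG x)]
    have e3 : F1 F G x + F2 F G x = F x := by simp only [F1, F2]; ring
    rw [e3, hFdef]
    exact (ofReal_cdf μ x).symm
  -- second marginal
  have hmarg2 : π.map Prod.snd = ν := by
    refine (Measure.ext_of_Iic ν (π.map Prod.snd) (fun x => ?_)).symm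
    rw [Measure.map_apply measurable_snd measurableSet_Iic, hπdef, Measure.add_apply,
      hAapply _ (measurable_snd measurableSet_Iic), hBapply _ (measurable_snd measurableSet_Iic)]
    have e1 : pair1 ⁻¹' (Prod.snd ⁻¹' Iic x) = qf (G1 F G) ⁻¹' Iic x := rfl
    have e2 : pair2 ⁻¹' (Prod.snd ⁻¹' Iic x) = qf (G2 F G) ⁻¹' Iic x := rfl
    rw [e1, e2, volume_qf_preimage (G1_mono hF hG) (G1_rc hF hG) (G1_bot hF hG) (G1_top hF hG),
      volume_qf_preimage (G2_mono hF hG) (G2_rc hF hG) (G2_bot hF hG) (G2_top hF hG),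
      ← ENNReal.ofReal_add (G1_nonneg hF hG x) (G2_nonneg hF hG x)]
    have e3 : G1 F G x + G2 F G x = G x := by simp only [G1, G2]; ring
    rw [e3, hGdef]
    exact (ofReal_cdf ν x).symm
  have hπuniv : π univ = 1 := by
    have h := congrArg (fun m : Measure ℝ => m univ) hmarg1
    simpa [Measure.map_apply measurable_fst MeasurableSet.univ] using h
  -- the event
  have hAS : A S = ENNReal.ofReal m1 := by
    rw [hAapply S hS]
    have hsub : Ioo 0 m1 ⊆ pair1 ⁻¹' S := by
      intro t ht
      show qf (F1 F G) t ≤ qf (G1 F G) t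
      exact qf_le_qf (F1_mono hF hG) (F1_bot hF hG) (G1_top hF hG) (G1_le_F1 hF hG) ht.1 ht.2
    rw [inter_eq_right.mpr hsub, Real.volume_Ioo, sub_zero]
  have hπS : ENNReal.ofReal m1 ≤ π S := by
    rw [hπdef, Measure.add_apply, hAS]
    exact le_self_add
  have hπS_le : π S ≤ 1 := by rw [← hπuniv]; exact measure_mono (subset_univ _)
  have hr0 : 1 - s ≤ (π S).toReal := by
    have h := ENNReal.toReal_mono (hπS_le.trans_lt ENNReal.one_lt_top).ne hπS
    rwa [ENNReal.toReal_ofReal (by linarith)] at h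
  have hmem : (π S).toReal ∈ R := ⟨π, hmarg1, hmarg2, rfl⟩
  have hbddR : BddAbove R := ⟨1 - s, fun r hr => hub r hr⟩
  have hle1 : sSup R ≤ 1 - s := csSup_le ⟨_, hmem⟩ hub
  have hle2 : 1 - s ≤ sSup R := hr0.trans (le_csSup hbddR hmem)
  linarith
end

section
/- Let S be a Polish space with closed partial order ⪯. If δ : P(S) × P(S) → [0,1] is a measure of degree of stochastic dominance satisfying Axiom 1, then δ(μ, ν) = 1 if and only if μ ⪯_sd ν. -/
open MeasureTheory

/-- Stochastic dominance for finite measures: equal total mass and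
`∫h dμ ≤ ∫h dν` for all bounded increasing measurable `h`. -/
def StochDom {S : Type*} [MeasurableSpace S] [Preorder S] (μ ν : Measure S) : Prop :=
  μ Set.univ = ν Set.univ ∧
    ∀ h : S → ℝ, Measurable h → Monotone h → (∃ C, ∀ x, |h x| ≤ C) →
      ∫ x, h x ∂μ ≤ ∫ x, h x ∂ν

/-- If `δ` is a measure of degree of stochastic dominance satisfying Axiom 1, then
`δ(μ, ν) = 1` if and only if `μ ⪯_sd ν`. -/
theorem axiom1_gives_iff {S : Type*} [TopologicalSpace S] [PolishSpace S]
    [MeasurableSpace S] [BorelSpace S] [PartialOrder S]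
    (hcl : IsClosed {p : S × S | p.1 ≤ p.2})
    (δ : Measure S → Measure S → ℝ)
    (hrange : ∀ μ ν : Measure S, IsProbabilityMeasure μ → IsProbabilityMeasure ν →
      δ μ ν ∈ Set.Icc (0 : ℝ) 1)
    (hdom : ∀ μ ν : Measure S, IsProbabilityMeasure μ → IsProbabilityMeasure ν →
      StochDom μ ν → δ μ ν = 1)
    (hax1 : ∀ μ ν : Measure S, IsProbabilityMeasure μ → IsProbabilityMeasure ν →
      ∀ ε : ℝ, 0 < ε →
        ∃ μ' ν' : Measure S, IsFiniteMeasure μ' ∧ IsFiniteMeasure ν' ∧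
          μ' ≤ μ ∧ ν' ≤ ν ∧ StochDom μ' ν' ∧ δ μ ν ≤ (μ' Set.univ).toReal + ε)
    (μ ν : Measure S) [IsProbabilityMeasure μ] [IsProbabilityMeasure ν] :
    δ μ ν = 1 ↔ StochDom μ ν := by
  constructor
  · intro hδ
    refine ⟨by simp [measure_univ], ?_⟩
    rintro h hmeas hmono ⟨C, hC⟩
    set C' : ℝ := max C 0 + 1 with hC'def
    have hC'pos : (0 : ℝ) < C' := by positivity
    have hCbound : ∀ x, ‖h x‖ ≤ C' := fun x => by
      rw [Real.norm_eq_abs]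
      exact (hC x).trans (by linarith [le_max_left C 0])
    have hint : ∀ (m : Measure S), IsFiniteMeasure m → Integrable h m := fun m hm => by
      haveI := hm
      exact (integrable_const C').mono' hmeas.aestronglyMeasurable (ae_of_all _ hCbound)
    apply le_of_forall_pos_le_add
    intro ε hε
    set ε' : ℝ := ε / (2 * C') with hε'def
    have hε' : 0 < ε' := by positivity
    obtain ⟨μ', ν', hfμ', hfν', hleμ, hleν, hsd, hδle⟩ := hax1 μ ν ‹_› ‹_› ε' hε'
    haveI := hfμ'; haveI := hfν'
    -- masses
    have hμ'le : μ' Set.univ ≤ 1 := by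
      simpa [measure_univ] using hleμ Set.univ
    have hν'le : ν' Set.univ ≤ 1 := by
      simpa [measure_univ] using hleν Set.univ
    set m : ℝ := (μ' Set.univ).toReal with hm
    have hmle1 : m ≤ 1 := by
      simpa [hm] using ENNReal.toReal_mono (by norm_num) hμ'le
    have hmlb : 1 - ε' ≤ m := by
      rw [hδ] at hδle; linarith
    have hνmass : (ν' Set.univ).toReal = m := by rw [hm, hsd.1]
    -- decompositions
    have hμdec : (μ - μ') + μ' = μ := Measure.sub_add_cancel_of_le hleμ
    have hνdec : (ν - ν') + ν' = ν := Measure.sub_add_cancel_of_le hleν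
    have hμsub : ((μ - μ') Set.univ).toReal = 1 - m := by
      rw [Measure.sub_apply MeasurableSet.univ hleμ, measure_univ,
        ENNReal.toReal_sub_of_le hμ'le (by norm_num)]
      simp [hm]
    have hνsub : ((ν - ν') Set.univ).toReal = 1 - m := by
      rw [Measure.sub_apply MeasurableSet.univ hleν, measure_univ,
        ENNReal.toReal_sub_of_le hν'le (by norm_num)]
      simp [hνmass]
    -- integral splits
    have hμint : ∫ x, h x ∂μ = ∫ x, h x ∂(μ - μ') + ∫ x, h x ∂μ' := by
      rw [← integral_add_measure (hint _ inferInstance) (hint _ inferInstance), hμdec]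
    have hνint : ∫ x, h x ∂ν = ∫ x, h x ∂(ν - ν') + ∫ x, h x ∂ν' := by
      rw [← integral_add_measure (hint _ inferInstance) (hint _ inferInstance), hνdec]
    -- bounds on the remainder integrals
    have hb1 : |∫ x, h x ∂(μ - μ')| ≤ C' * (1 - m) := by
      rw [← Real.norm_eq_abs, ← hμsub]
      exact norm_integral_le_of_norm_le_const (ae_of_all _ hCbound)
    have hb2 : |∫ x, h x ∂(ν - ν')| ≤ C' * (1 - m) := by
      rw [← Real.norm_eq_abs, ← hνsub]
      exact norm_integral_le_of_norm_le_const (ae_of_all _ hCbound)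
    have hmid : ∫ x, h x ∂μ' ≤ ∫ x, h x ∂ν' :=
      hsd.2 h hmeas hmono ⟨C, hC⟩
    have h1m : 1 - m ≤ ε' := by linarith
    have hCε : C' * (1 - m) ≤ C' * ε' := by
      exact mul_le_mul_of_nonneg_left h1m hC'pos.le
    have h2Cε : 2 * (C' * ε') = ε := by
      field_simp [hε'def]
      rw [hε'def]; field_simp
    have hb1' := abs_le.mp hb1
    have hb2' := abs_le.mp hb2
    rw [hμint, hνint]
    nlinarith [hC'pos, hε]
  · intro hsd
    exact hdom μ ν ‹_› ‹_› hsd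
end

section
/- τ satisfies Axiom 1: for any probability measures μ, ν on a Polish space with closed partial order, there exist finite measures μ' ≤ μ and ν' ≤ ν with μ' ⪯_sd ν' and μ'(S) = ν'(S) = τ(μ, ν); in particular τ(μ, ν) ≤ μ'(S) + ε for every ε > 0. -/
open MeasureTheory

open Filter Topology
open scoped ENNReal NNReal

section Helpers
variable {Y : Type*} [TopologicalSpace Y]

lemma mapClusterPt_mem_closed {u : ℕ → Y} {a : Y} {C : Set Y}
    (h : MapClusterPt a atTop u) (hC : IsClosed C) (hu : ∀ n, u n ∈ C) : a ∈ C := by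
  have h1 : Filter.map u atTop ≤ Filter.principal C :=
    le_principal_iff.2 (Filter.eventually_map.2 (Filter.Eventually.of_forall hu))
  have h2 : ClusterPt a (Filter.principal C) := h.clusterPt.mono h1
  rw [← hC.closure_eq]
  exact mem_closure_iff_clusterPt.2 h2

lemma mapClusterPt_eq_of_tendsto [T2Space Y] {u : ℕ → Y} {a b : Y}
    (h : MapClusterPt a atTop u) (hb : Tendsto u atTop (nhds b)) : a = b :=
  eq_of_nhds_neBot (h.clusterPt.mono hb)

variable {X : Type*} [MeasurableSpace X]

lemma inner_toLp_eq (μ : Measure X) (f g : X → ℝ) (hf : MemLp f 2 μ) (hg : MemLp g 2 μ) :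
    (inner ℝ (hf.toLp f) (hg.toLp g) : ℝ) = ∫ x, f x * g x ∂μ := by
  rw [MeasureTheory.L2.inner_def]
  apply integral_congr_ae
  filter_upwards [hf.coeFn_toLp, hg.coeFn_toLp] with x h1 h2
  rw [h1, h2]
  simp [RCLike.inner_apply, mul_comm]

lemma side_setup (μ : Measure X) [IsProbabilityMeasure μ] (ρ : ℕ → Measure X)
    (hle : ∀ n, ρ n ≤ μ) :
    ∃ Λ : ℕ → WeakDual ℝ (Lp ℝ 2 μ),
      (∀ n, Λ n ∈ WeakDual.toStrongDual ⁻¹' Metric.closedBall 0 1) ∧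
      ∀ n (h : X → ℝ) (hh : MemLp h 2 μ), Λ n (hh.toLp h) = ∫ x, h x ∂(ρ n) := by
  haveI hfin : ∀ n, IsFiniteMeasure (ρ n) := fun n => isFiniteMeasure_of_le μ (hle n)
  set fn : ℕ → X → ℝ≥0 := fun n x => ((ρ n).rnDeriv μ x).toNNReal with hfn
  have hfnm : ∀ n, Measurable (fn n) := fun n => ((ρ n).measurable_rnDeriv μ).ennreal_toNNReal
  have hfn_le : ∀ n, ∀ᵐ x ∂μ, (fn n x : ℝ≥0∞) ≤ 1 := by
    intro n
    filter_upwards [Measure.rnDeriv_le_one_of_le (hle n), Measure.rnDeriv_lt_top (ρ n) μ]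
      with x h1 h2
    rw [ENNReal.coe_toNNReal h2.ne]
    exact h1
  have hwd : ∀ n, μ.withDensity (fun x => (fn n x : ℝ≥0∞)) = ρ n := by
    intro n
    rw [withDensity_congr_ae (g := (ρ n).rnDeriv μ), Measure.withDensity_rnDeriv_eq _ _
      (hle n).absolutelyContinuous]
    filter_upwards [Measure.rnDeriv_lt_top (ρ n) μ] with x hx
    exact ENNReal.coe_toNNReal hx.ne
  have hmem : ∀ n, MemLp (fun x => (fn n x : ℝ)) 2 μ := by
    intro n
    refine MemLp.of_bound ((hfnm n).coe_nnreal_real.aestronglyMeasurable) 1 ?_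
    filter_upwards [hfn_le n] with x hx
    have : (fn n x : ℝ) ≤ 1 := by exact_mod_cast (ENNReal.coe_le_one_iff.mp hx)
    rw [Real.norm_eq_abs, abs_of_nonneg (fn n x).coe_nonneg]
    exact this
  refine ⟨fun n => WeakDual.toStrongDual.symm
    (InnerProductSpace.toDual ℝ (Lp ℝ 2 μ) ((hmem n).toLp _)), fun n => ?_, fun n h hh => ?_⟩
  · simp only [Set.mem_preimage, LinearEquiv.apply_symm_apply, mem_closedBall_zero_iff]
    rw [(InnerProductSpace.toDual ℝ (Lp ℝ 2 μ)).norm_map, Lp.norm_toLp]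
    have hb : eLpNorm (fun x => (fn n x : ℝ)) 2 μ ≤ 1 := by
      have := eLpNorm_le_of_ae_bound (p := 2) (μ := μ) (C := 1)
        (f := fun x => (fn n x : ℝ)) ?_
      · simpa using this
      · filter_upwards [hfn_le n] with x hx
        have : (fn n x : ℝ) ≤ 1 := by exact_mod_cast (ENNReal.coe_le_one_iff.mp hx)
        rw [Real.norm_eq_abs, abs_of_nonneg (fn n x).coe_nonneg]
        exact this
    exact_mod_cast ENNReal.toReal_le_of_le_ofReal zero_le_one (by simpa using hb)
  · have h1 : (WeakDual.toStrongDual.symm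
        (InnerProductSpace.toDual ℝ (Lp ℝ 2 μ) ((hmem n).toLp _)) : WeakDual ℝ (Lp ℝ 2 μ))
        (hh.toLp h) = (inner ℝ ((hmem n).toLp _) (hh.toLp h) : ℝ) := by
      rfl
    rw [h1, inner_toLp_eq μ _ h (hmem n) hh, ← hwd n,
      integral_withDensity_eq_integral_smul (hfnm n)]
    simp [NNReal.smul_def]

lemma limit_setup (μ : Measure X) [IsProbabilityMeasure μ] (Λ : WeakDual ℝ (Lp ℝ 2 μ))
    (hpos : ∀ (B : Set X), MeasurableSet B → ∀ (hmem : MemLp (B.indicator (fun _ => (1:ℝ))) 2 μ),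
       Λ (hmem.toLp _) ∈ Set.Icc 0 (μ B).toReal) :
    ∃ μ' : Measure X, μ' ≤ μ ∧
      ∀ (h : X → ℝ) (hh : MemLp h 2 μ), ∫ x, h x ∂μ' = Λ (hh.toLp h) := by
  set f : Lp ℝ 2 μ := (InnerProductSpace.toDual ℝ (Lp ℝ 2 μ)).symm
    (WeakDual.toStrongDual Λ) with hf
  have hf_eval : ∀ φ : Lp ℝ 2 μ, Λ φ = (inner ℝ f φ : ℝ) := by
    intro φ
    rw [hf]
    rw [← InnerProductSpace.toDual_apply_apply, LinearIsometryEquiv.apply_symm_apply]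
    rfl
  have hfmem : MemLp (f : X → ℝ) 2 μ := Lp.memLp f
  have hfint : Integrable (f : X → ℝ) μ := hfmem.integrable one_le_two
  have hset : ∀ B : Set X, MeasurableSet B →
      ∫ x in B, (f : X → ℝ) x ∂μ ∈ Set.Icc 0 (μ B).toReal := by
    intro B hB
    have hmem : MemLp (B.indicator (fun _ => (1:ℝ))) 2 μ :=
      MemLp.of_bound (aestronglyMeasurable_const.indicator hB) 1
        (Filter.Eventually.of_forall fun x => by
          by_cases hx : x ∈ B <;> simp [Set.indicator_apply, hx])
    have h2 := hpos B hB hmem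
    have h3 : Λ (hmem.toLp _) = ∫ x in B, (f : X → ℝ) x ∂μ := by
      rw [hf_eval]
      have : f = hfmem.toLp (f : X → ℝ) := (Lp.toLp_coeFn f hfmem).symm
      rw [this]
      rw [inner_toLp_eq μ _ _ hfmem hmem]
      rw [← integral_indicator hB]
      congr 1
      ext x
      by_cases hx : x ∈ B <;> simp [Set.indicator_apply, hx]
    rwa [h3] at h2
  have hf_nonneg : 0 ≤ᵐ[μ] (f : X → ℝ) := by
    apply ae_nonneg_of_forall_setIntegral_nonneg hfint
    intro s hs _
    exact (hset s hs).1
  have hf_le_one : (f : X → ℝ) ≤ᵐ[μ] fun _ => (1:ℝ) := by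
    apply ae_le_of_forall_setIntegral_le hfint (integrable_const 1)
    intro s hs _
    rw [setIntegral_const]
    simpa [Measure.real] using (hset s hs).2
  set fnn : X → ℝ≥0 := fun x => Real.toNNReal ((f : X → ℝ) x) with hfnn
  have hfnn_ae : AEMeasurable fnn μ :=
    measurable_real_toNNReal.comp_aemeasurable (Lp.aestronglyMeasurable f).aemeasurable
  refine ⟨μ.withDensity (fun x => (fnn x : ℝ≥0∞)), ?_, fun h hh => ?_⟩
  · have : μ.withDensity (fun x => (fnn x : ℝ≥0∞)) ≤ μ.withDensity 1 := by
      apply withDensity_mono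
      filter_upwards [hf_nonneg, hf_le_one] with x h0 h1
      simp only [Pi.one_apply]
      rw [ENNReal.coe_le_one_iff]
      exact Real.toNNReal_le_one.2 h1
    simpa [withDensity_one] using this
  · rw [integral_withDensity_eq_integral_smul₀ hfnn_ae, hf_eval]
    have : f = hfmem.toLp (f : X → ℝ) := (Lp.toLp_coeFn f hfmem).symm
    rw [this, inner_toLp_eq μ _ _ hfmem hh]
    apply integral_congr_ae
    filter_upwards [hf_nonneg] with x h0
    simp [hfnn, NNReal.smul_def, Real.coe_toNNReal _ h0]

end Helpers

/-- `τ` satisfies Axiom 1: there are finite measures `μ' ≤ μ`, `ν' ≤ ν` with `μ' ⪯_sd ν'`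
and `μ'(S) = ν'(S) = τ(μ, ν)` (hence `τ(μ, ν) ≤ μ'(S) + ε` for every `ε > 0`). -/
theorem tau_satisfies_axiom1 {S : Type*} [TopologicalSpace S] [PolishSpace S]
    [MeasurableSpace S] [BorelSpace S] [PartialOrder S]
    (hcl : IsClosed {p : S × S | p.1 ≤ p.2})
    (μ ν : Measure S) [IsProbabilityMeasure μ] [IsProbabilityMeasure ν] :
    ∃ μ' ν' : Measure S, IsFiniteMeasure μ' ∧ IsFiniteMeasure ν' ∧
      μ' ≤ μ ∧ ν' ≤ ν ∧ StochDom μ' ν' ∧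
      μ' Set.univ = (⨆ (π : Measure (S × S))
        (_ : π.map Prod.fst = μ ∧ π.map Prod.snd = ν), π {p : S × S | p.1 ≤ p.2}) ∧
      ν' Set.univ = (⨆ (π : Measure (S × S))
        (_ : π.map Prod.fst = μ ∧ π.map Prod.snd = ν), π {p : S × S | p.1 ≤ p.2}) := by
  classical
  set T : Set (S × S) := {p : S × S | p.1 ≤ p.2} with hT
  have hTm : MeasurableSet T := hcl.measurableSet
  set τ : ℝ≥0∞ := ⨆ (π : Measure (S × S))
      (_ : π.map Prod.fst = μ ∧ π.map Prod.snd = ν), π T with hτ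
  -- the product measure is a coupling
  have hprod : (μ.prod ν).map Prod.fst = μ ∧ (μ.prod ν).map Prod.snd = ν := by
    constructor
    · rw [Measure.map_fst_prod]; simp
    · rw [Measure.map_snd_prod]; simp
  -- every coupling is a probability measure
  have hprob : ∀ π : Measure (S × S), π.map Prod.fst = μ → IsProbabilityMeasure π := by
    intro π hπ
    constructor
    have h2 : π Set.univ = μ Set.univ := by
      rw [← hπ, Measure.map_apply measurable_fst MeasurableSet.univ, Set.preimage_univ]
    rw [h2, measure_univ]
  have hτ_le : τ ≤ 1 := by
    rw [hτ]
    refine iSup₂_le fun π hπ => ?_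
    haveI := hprob π hπ.1
    exact prob_le_one
  have hτ_ne_top : τ ≠ ∞ := (hτ_le.trans_lt ENNReal.one_lt_top).ne
  -- near optimal couplings
  have hex : ∀ n : ℕ, ∃ π : Measure (S × S),
      (π.map Prod.fst = μ ∧ π.map Prod.snd = ν) ∧
      τ - ENNReal.ofReal (1 / (n + 1)) ≤ π T := by
    intro n
    rcases eq_or_ne τ 0 with h0 | h0
    · exact ⟨μ.prod ν, hprod, by simp [h0]⟩
    · have hlt : τ - ENNReal.ofReal (1 / (n + 1)) < τ :=
        ENNReal.sub_lt_self hτ_ne_top h0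
          (by positivity)
      rw [hτ, lt_iSup_iff] at hlt
      obtain ⟨π, hπ⟩ := hlt
      rw [lt_iSup_iff] at hπ
      obtain ⟨hπmem, hπT⟩ := hπ
      exact ⟨π, hπmem, hπT.le⟩
  choose π hπmem hπT using hex
  haveI hπprob : ∀ n, IsProbabilityMeasure (π n) := fun n => hprob _ (hπmem n).1
  -- restricted marginals
  set μn : ℕ → Measure S := fun n => ((π n).restrict T).map Prod.fst with hμn
  set νn : ℕ → Measure S := fun n => ((π n).restrict T).map Prod.snd with hνn
  have hμn_le : ∀ n, μn n ≤ μ := by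
    intro n
    rw [← (hπmem n).1]
    rw [Measure.le_iff]
    intro s hs
    rw [hμn, Measure.map_apply measurable_fst hs, Measure.map_apply measurable_fst hs,
      Measure.restrict_apply (hs.preimage measurable_fst)]
    exact measure_mono Set.inter_subset_left
  have hνn_le : ∀ n, νn n ≤ ν := by
    intro n
    rw [← (hπmem n).2]
    rw [Measure.le_iff]
    intro s hs
    rw [hνn, Measure.map_apply measurable_snd hs, Measure.map_apply measurable_snd hs,
      Measure.restrict_apply (hs.preimage measurable_snd)]
    exact measure_mono Set.inter_subset_left
  have hμn_univ : ∀ n, μn n Set.univ = π n T := by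
    intro n
    rw [hμn, Measure.map_apply measurable_fst MeasurableSet.univ, Set.preimage_univ,
      Measure.restrict_apply_univ]
  have hνn_univ : ∀ n, νn n Set.univ = π n T := by
    intro n
    rw [hνn, Measure.map_apply measurable_snd MeasurableSet.univ, Set.preimage_univ,
      Measure.restrict_apply_univ]
  -- per-n stochastic dominance
  have hdomn : ∀ n (h : S → ℝ), Measurable h → Monotone h → ∀ C : ℝ, (∀ x, |h x| ≤ C) →
      ∫ x, h x ∂(μn n) ≤ ∫ x, h x ∂(νn n) := by
    intro n h hm hmono C hC
    rw [hμn, hνn, integral_map measurable_fst.aemeasurable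
        hm.stronglyMeasurable.aestronglyMeasurable,
      integral_map measurable_snd.aemeasurable hm.stronglyMeasurable.aestronglyMeasurable]
    have hint1 : Integrable (fun p : S × S => h p.1) ((π n).restrict T) := by
      rw [← memLp_one_iff_integrable]
      exact MemLp.of_bound ((hm.comp measurable_fst).stronglyMeasurable.aestronglyMeasurable)
        C (Filter.Eventually.of_forall fun p => by simpa [Real.norm_eq_abs] using hC p.1)
    have hint2 : Integrable (fun p : S × S => h p.2) ((π n).restrict T) := by
      rw [← memLp_one_iff_integrable]
      exact MemLp.of_bound ((hm.comp measurable_snd).stronglyMeasurable.aestronglyMeasurable)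
        C (Filter.Eventually.of_forall fun p => by simpa [Real.norm_eq_abs] using hC p.2)
    refine integral_mono_ae hint1 hint2 ?_
    filter_upwards [ae_restrict_mem hTm] with p hp
    exact hmono hp
  -- L² functionals
  obtain ⟨Λ, hΛball, hΛrep⟩ := side_setup μ μn hμn_le
  obtain ⟨Γ, hΓball, hΓrep⟩ := side_setup ν νn hνn_le
  have hK : IsCompact ((WeakDual.toStrongDual ⁻¹' Metric.closedBall 0 1 :
        Set (WeakDual ℝ (Lp ℝ 2 μ))) ×ˢ
      (WeakDual.toStrongDual ⁻¹' Metric.closedBall 0 1 : Set (WeakDual ℝ (Lp ℝ 2 ν)))) :=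
    (WeakDual.isCompact_closedBall (𝕜 := ℝ) (E := Lp ℝ 2 μ) 0 1).prod
      (WeakDual.isCompact_closedBall (𝕜 := ℝ) (E := Lp ℝ 2 ν) 0 1)
  have hmap : Filter.map (fun n => (Λ n, Γ n)) atTop ≤ Filter.principal _ :=
    le_principal_iff.2 (Filter.eventually_map.2
      (Filter.Eventually.of_forall fun n => Set.mk_mem_prod (hΛball n) (hΓball n)))
  obtain ⟨⟨L, G⟩, _, hz⟩ := hK.exists_mapClusterPt hmap
  -- cluster points of evaluations
  have hpair : ∀ (φ : Lp ℝ 2 μ) (ψ : Lp ℝ 2 ν),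
      MapClusterPt (L φ, G ψ) atTop (fun n => (Λ n φ, Γ n ψ)) := by
    intro φ ψ
    have hg : Continuous fun p : WeakDual ℝ (Lp ℝ 2 μ) × WeakDual ℝ (Lp ℝ 2 ν) =>
        (p.1 φ, p.2 ψ) :=
      ((WeakDual.eval_continuous φ).comp continuous_fst).prodMk
        ((WeakDual.eval_continuous ψ).comp continuous_snd)
    exact hz.continuousAt_comp hg.continuousAt
  have hL1 : ∀ φ : Lp ℝ 2 μ, MapClusterPt (L φ) atTop (fun n => Λ n φ) := by
    intro φ
    have hg : Continuous fun p : WeakDual ℝ (Lp ℝ 2 μ) × WeakDual ℝ (Lp ℝ 2 ν) => p.1 φ :=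
      (WeakDual.eval_continuous φ).comp continuous_fst
    exact hz.continuousAt_comp hg.continuousAt
  have hG1 : ∀ ψ : Lp ℝ 2 ν, MapClusterPt (G ψ) atTop (fun n => Γ n ψ) := by
    intro ψ
    have hg : Continuous fun p : WeakDual ℝ (Lp ℝ 2 μ) × WeakDual ℝ (Lp ℝ 2 ν) => p.2 ψ :=
      (WeakDual.eval_continuous ψ).comp continuous_snd
    exact hz.continuousAt_comp hg.continuousAt
  -- mass convergence
  have hπT_le : ∀ n, π n T ≤ τ := fun n => le_iSup₂ (f := fun (π : Measure (S × S))
    (_ : π.map Prod.fst = μ ∧ π.map Prod.snd = ν) => π T) (π n) (hπmem n)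
  have hmassto : Tendsto (fun n => (π n T).toReal) atTop (nhds τ.toReal) := by
    have hub : ∀ n, (π n T).toReal ≤ τ.toReal :=
      fun n => ENNReal.toReal_mono hτ_ne_top (hπT_le n)
    have hlb : ∀ n : ℕ, τ.toReal - 1 / (n + 1) ≤ (π n T).toReal := by
      intro n
      have h1 : τ ≤ π n T + ENNReal.ofReal (1 / (n + 1)) := tsub_le_iff_right.mp (hπT n)
      have h2 : τ.toReal ≤ (π n T).toReal + 1 / (n + 1) := by
        have := ENNReal.toReal_mono (by
          exact ENNReal.add_ne_top.2 ⟨measure_ne_top _ _, ENNReal.ofReal_ne_top⟩) h1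
        rwa [ENNReal.toReal_add (measure_ne_top _ _) ENNReal.ofReal_ne_top,
          ENNReal.toReal_ofReal (by positivity)] at this
      linarith
    refine tendsto_of_tendsto_of_tendsto_of_le_of_le ?_ tendsto_const_nhds hlb hub
    have : Tendsto (fun n : ℕ => τ.toReal - 1 / (n + 1)) atTop (nhds (τ.toReal - 0)) :=
      tendsto_const_nhds.sub tendsto_one_div_add_atTop_nhds_zero_nat
    simpa using this
  -- constants
  have honeμ : MemLp (fun _ : S => (1:ℝ)) 2 μ := memLp_const 1
  have honeν : MemLp (fun _ : S => (1:ℝ)) 2 ν := memLp_const 1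
  have hLone : L (honeμ.toLp _) = τ.toReal := by
    refine mapClusterPt_eq_of_tendsto (hL1 _) ?_
    have : ∀ n, Λ n (honeμ.toLp _) = (π n T).toReal := by
      intro n
      rw [hΛrep n _ honeμ, integral_const, ← hμn_univ n]
      simp [Measure.real]
    exact Filter.Tendsto.congr (fun n => (this n).symm) hmassto
  have hGone : G (honeν.toLp _) = τ.toReal := by
    refine mapClusterPt_eq_of_tendsto (hG1 _) ?_
    have : ∀ n, Γ n (honeν.toLp _) = (π n T).toReal := by
      intro n
      rw [hΓrep n _ honeν, integral_const, ← hνn_univ n]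
      simp [Measure.real]
    exact Filter.Tendsto.congr (fun n => (this n).symm) hmassto
  -- positivity hypotheses for the limits
  have hposμ : ∀ (B : Set S), MeasurableSet B →
      ∀ (hmem : MemLp (B.indicator (fun _ => (1:ℝ))) 2 μ),
      L (hmem.toLp _) ∈ Set.Icc 0 (μ B).toReal := by
    intro B hB hmem
    refine mapClusterPt_mem_closed (hL1 _) isClosed_Icc fun n => ?_
    rw [hΛrep n _ hmem, integral_indicator_const (1:ℝ) hB]
    constructor
    · simp [ENNReal.toReal_nonneg]
    · simp only [smul_eq_mul, mul_one]
      exact ENNReal.toReal_mono (measure_ne_top _ _) (Measure.le_iff'.1 (hμn_le n) B)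
  have hposν : ∀ (B : Set S), MeasurableSet B →
      ∀ (hmem : MemLp (B.indicator (fun _ => (1:ℝ))) 2 ν),
      G (hmem.toLp _) ∈ Set.Icc 0 (ν B).toReal := by
    intro B hB hmem
    refine mapClusterPt_mem_closed (hG1 _) isClosed_Icc fun n => ?_
    rw [hΓrep n _ hmem, integral_indicator_const (1:ℝ) hB]
    constructor
    · simp [ENNReal.toReal_nonneg]
    · simp only [smul_eq_mul, mul_one]
      exact ENNReal.toReal_mono (measure_ne_top _ _) (Measure.le_iff'.1 (hνn_le n) B)
  obtain ⟨μ', hμ'le, hμ'rep⟩ := limit_setup μ L hposμ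
  obtain ⟨ν', hν'le, hν'rep⟩ := limit_setup ν G hposν
  haveI : IsFiniteMeasure μ' := isFiniteMeasure_of_le μ hμ'le
  haveI : IsFiniteMeasure ν' := isFiniteMeasure_of_le ν hν'le
  -- masses
  have hμ'univ : μ' Set.univ = τ := by
    have h1 : ∫ x, (1:ℝ) ∂μ' = τ.toReal := by rw [hμ'rep _ honeμ, hLone]
    rw [integral_const, smul_eq_mul, mul_one, Measure.real] at h1
    rw [← ENNReal.ofReal_toReal (measure_ne_top μ' _), h1, ENNReal.ofReal_toReal hτ_ne_top]
  have hν'univ : ν' Set.univ = τ := by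
    have h1 : ∫ x, (1:ℝ) ∂ν' = τ.toReal := by rw [hν'rep _ honeν, hGone]
    rw [integral_const, smul_eq_mul, mul_one, Measure.real] at h1
    rw [← ENNReal.ofReal_toReal (measure_ne_top ν' _), h1, ENNReal.ofReal_toReal hτ_ne_top]
  refine ⟨μ', ν', inferInstance, inferInstance, hμ'le, hν'le, ⟨?_, ?_⟩, hμ'univ, hν'univ⟩
  · rw [hμ'univ, hν'univ]
  · rintro h hm hmono ⟨C, hC⟩
    have hmemμ : MemLp h 2 μ := MemLp.of_bound hm.stronglyMeasurable.aestronglyMeasurable C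
      (Filter.Eventually.of_forall fun x => by simpa [Real.norm_eq_abs] using hC x)
    have hmemν : MemLp h 2 ν := MemLp.of_bound hm.stronglyMeasurable.aestronglyMeasurable C
      (Filter.Eventually.of_forall fun x => by simpa [Real.norm_eq_abs] using hC x)
    rw [hμ'rep _ hmemμ, hν'rep _ hmemν]
    have hmem2 : (L (hmemμ.toLp h), G (hmemν.toLp h)) ∈ {p : ℝ × ℝ | p.1 ≤ p.2} := by
      refine mapClusterPt_mem_closed (hpair _ _)
        (isClosed_le continuous_fst continuous_snd) fun n => ?_
      simp only [Set.mem_setOf_eq]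
      rw [hΛrep n _ hmemμ, hΓrep n _ hmemν]
      exact hdomn n h hm hmono C hC
    exact hmem2
end

section
/- Fix a grid of n ≥ 3 points a = x_1 < x_2 < ... < x_n = b in [a,b] and define q(F, G) = (1/n)·#{i : G(x_i) ≤ F(x_i)} for CDFs F, G on [a,b]. Then q fails the mixture axiom: there exist CDFs F, G of the form F = λF' + (1−λ)F'', G = λF' + (1−λ)G'' with λ ∈ (0,1) arbitrarily close to 1 and F'' strictly below G'' on (a,b), such that q(F, G) ≤ 2/n < λ. -/
/-- A cumulative distribution function on `[a, b]`. -/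
def IsCDFOn (F : ℝ → ℝ) (a b : ℝ) : Prop :=
  Monotone F ∧ (∀ x, 0 ≤ F x ∧ F x ≤ 1) ∧ F b = 1 ∧ ∀ x, x < a → F x = 0

lemma step_isCDFOn (a b c : ℝ) (hac : a ≤ c) (hcb : c ≤ b) :
    IsCDFOn (fun y => if c ≤ y then (1:ℝ) else 0) a b := by
  refine ⟨?_, ?_, ?_, ?_⟩
  · intro u v huv
    by_cases hu : c ≤ u <;> by_cases hv : c ≤ v <;> simp [hu, hv] <;> linarith
  · intro y; by_cases h : c ≤ y <;> simp [h]
  · simp [hcb]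
  · intro y hy
    have : ¬ c ≤ y := by linarith
    simp [this]

/-- The grid measure `q` fails the mixture axiom: for any `λ` with `2/n < λ < 1` there are
CDFs `F = λF' + (1−λ)F''` and `G = λF' + (1−λ)G''` with `F''` strictly below `G''` on
`(a,b)` such that `q(F, G) ≤ 2/n < λ`. -/
theorem q_fails_mixture_axiom (a b : ℝ) (hab : a < b) (n : ℕ) (hn : 3 ≤ n)
    (x : Fin n → ℝ) (hmono : StrictMono x)
    (hx0 : x ⟨0, by omega⟩ = a) (hxn : x ⟨n - 1, by omega⟩ = b)
    (hrange : ∀ i, x i ∈ Set.Icc a b)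
    (lam : ℝ) (hl1 : 2 / n < lam) (hl2 : lam < 1) :
    ∃ F' F'' G'' : ℝ → ℝ, IsCDFOn F' a b ∧ IsCDFOn F'' a b ∧ IsCDFOn G'' a b ∧
      (∀ y ∈ Set.Ioo a b, F'' y < G'' y) ∧
      (({i : Fin n | lam * F' (x i) + (1 - lam) * G'' (x i)
          ≤ lam * F' (x i) + (1 - lam) * F'' (x i)}.ncard : ℝ)) / n ≤ 2 / n ∧
      2 / n < lam := by
  set F'' : ℝ → ℝ := fun y => if b ≤ y then (1:ℝ) else 0 with hF''
  set G'' : ℝ → ℝ := fun y => if a ≤ y then (1:ℝ) else 0 with hG''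
  refine ⟨G'', F'', G'', step_isCDFOn a b a le_rfl hab.le, step_isCDFOn a b b hab.le le_rfl,
    step_isCDFOn a b a le_rfl hab.le, ?_, ?_, hl1⟩
  · intro y hy
    obtain ⟨h1, h2⟩ := hy
    have : ¬ b ≤ y := by linarith
    simp [hF'', hG'', this, h1.le]
  · have hnpos : (0:ℝ) < n := by positivity
    rw [div_le_div_iff_of_pos_right hnpos]
    have hsub : {i : Fin n | lam * G'' (x i) + (1 - lam) * G'' (x i)
        ≤ lam * G'' (x i) + (1 - lam) * F'' (x i)} ⊆ {(⟨n - 1, by omega⟩ : Fin n)} := by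
      intro i hi
      simp only [Set.mem_setOf_eq] at hi
      have hlam : (0:ℝ) < 1 - lam := by linarith
      have h1 : G'' (x i) ≤ F'' (x i) := by nlinarith
      have hxi := hrange i
      have hG : G'' (x i) = 1 := by simp [hG'', hxi.1]
      have hb : b ≤ x i := by
        by_contra h
        rw [hG] at h1
        simp [hF'', h] at h1
        linarith
      have hxib : x i = x ⟨n - 1, by omega⟩ := by rw [hxn]; exact le_antisymm hxi.2 hb
      exact Set.mem_singleton_iff.mpr (hmono.injective hxib)
    have hle : {i : Fin n | lam * G'' (x i) + (1 - lam) * G'' (x i)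
        ≤ lam * G'' (x i) + (1 - lam) * F'' (x i)}.ncard ≤ 1 := by
      simpa using Set.ncard_le_ncard hsub (Set.finite_singleton _)
    have : ({i : Fin n | lam * G'' (x i) + (1 - lam) * G'' (x i)
        ≤ lam * G'' (x i) + (1 - lam) * F'' (x i)}.ncard : ℝ) ≤ 1 := by exact_mod_cast hle
    linarith
end

section
/- Let 0 < ε < 1/2, let F be the CDF of the measure putting mass ε at 0 and 1−ε at 1, and let G be the CDF of the point mass at 1−ε, on [0,1]. Then the restricted dominance measure r(F, G) = sup{c : G(x) ≤ F(x) ∀x ≤ c} = 1 − ε, which strictly exceeds τ(F, G) = ε. -/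
/-- For `F` the CDF of `ε·δ₀ + (1−ε)·δ₁` and `G` the CDF of `δ_{1−ε}` (with `0 < ε < 1/2`),
the restricted dominance measure `r(F, G) = sup{c : G ≤ F on (−∞, c]} = 1 − ε`, which
strictly exceeds `τ(F, G) = 1 − sup_x (G(x) − F(x)) = ε`. -/
theorem r_exceeds_tau_example (ε : ℝ) (h0 : 0 < ε) (h1 : ε < 1 / 2)
    (F G : ℝ → ℝ)
    (hF : F = fun x => if x < 0 then 0 else if x < 1 then ε else 1)
    (hG : G = fun x => if x < 1 - ε then 0 else 1) :
    sSup {c : ℝ | ∀ x ≤ c, G x ≤ F x} = 1 - ε ∧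
    1 - (⨆ x : ℝ, (G x - F x)) = ε ∧
    ε < 1 - ε := by
  subst hF hG
  have hεlt : ε < 1 - ε := by linarith
  have hF0 : ∀ x : ℝ, (0:ℝ) ≤ (if x < 0 then (0:ℝ) else if x < 1 then ε else 1) := by
    intro x
    split_ifs <;> linarith
  have hset : {c : ℝ | ∀ x ≤ c, (if x < 1 - ε then (0:ℝ) else 1) ≤
      (if x < 0 then (0:ℝ) else if x < 1 then ε else 1)} = Set.Iio (1 - ε) := by
    ext c
    simp only [Set.mem_setOf_eq, Set.mem_Iio]
    constructor
    · intro h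
      by_contra hc
      push_neg at hc
      have := h (1 - ε) hc
      rw [if_neg (lt_irrefl _)] at this
      rw [if_neg (by linarith), if_pos (by linarith)] at this
      linarith
    · intro hc x hx
      rw [if_pos (lt_of_le_of_lt hx hc)]
      exact hF0 x
  refine ⟨by rw [hset]; exact csSup_Iio, ?_, hεlt⟩
  have hbd : ∀ x : ℝ, ((if x < 1 - ε then (0:ℝ) else 1) -
      (if x < 0 then (0:ℝ) else if x < 1 then ε else 1)) ≤ 1 - ε := by
    intro x
    split_ifs <;> linarith
  have hsup : (⨆ x : ℝ, ((if x < 1 - ε then (0:ℝ) else 1) -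
      (if x < 0 then (0:ℝ) else if x < 1 then ε else 1))) = 1 - ε := by
    apply le_antisymm (ciSup_le hbd)
    calc (1 - ε : ℝ) = (if (1-ε:ℝ) < 1 - ε then (0:ℝ) else 1) -
        (if (1-ε:ℝ) < 0 then (0:ℝ) else if (1-ε:ℝ) < 1 then ε else 1) := by
          rw [if_neg (lt_irrefl _), if_neg (by linarith : ¬((1-ε:ℝ) < 0)),
            if_pos (by linarith : (1-ε:ℝ) < 1)]
      _ ≤ _ := le_ciSup ⟨1 - ε, fun y ⟨x, hx⟩ => hx ▸ hbd x⟩ (1 - ε)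
  rw [hsup]; ring
end
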